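/- Let N, l ≥ 1 be natural numbers. If every subset A of C_N = {0,1,-1}^N ⊆ ℤ^N containing all standard basis vectors and symmetric admits a subset of cardinality l that is sum-free with respect to A, then every subset A' of C_{N+1} containing all standard basis vectors and symmetric admits a subset of cardinality l+1 that is sum-free with respect to A'. -/
import Mathlib

lemma snoc_add' {N : ℕ} (u v : Fin N → ℤ) (a b : ℤ) :
    (Fin.snoc u a : Fin (N+1) → ℤ) + Fin.snoc v b = Fin.snoc (u + v) (a + b) := by
  funext i
  refine Fin.lastCases ?_ (fun j => ?_) i <;> simp

lemma snoc_neg' {N : ℕ} (u : Fin N → ℤ) (a : ℤ) :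
    -(Fin.snoc u a : Fin (N+1) → ℤ) = Fin.snoc (-u) (-a) := by
  funext i
  refine Fin.lastCases ?_ (fun j => ?_) i <;> simp

lemma snoc_single' {N : ℕ} (k : Fin N) :
    (Fin.snoc (Pi.single k (1:ℤ)) 0 : Fin (N+1) → ℤ) = Pi.single (Fin.castSucc k) 1 := by
  funext i
  refine Fin.lastCases ?_ (fun j => ?_) i
  · simp [Pi.single_apply, (Fin.castSucc_lt_last k).ne']
  · simp [Pi.single_apply, Fin.castSucc_inj]

lemma single_last' {N : ℕ} :
    (Pi.single (Fin.last N) (1:ℤ) : Fin (N+1) → ℤ) = Fin.snoc (0 : Fin N → ℤ) 1 := by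
  funext i
  refine Fin.lastCases ?_ (fun j => ?_) i
  · simp
  · simp [Pi.single_apply, (Fin.castSucc_lt_last j).ne]

/-- **Theorem 3.2 (1).** The sum-free analogue of the extension step: if every symmetric
subset of the cube `{0,1,-1}^N` containing all basis vectors admits a sum-free subset of
size `l`, then every such subset of `{0,1,-1}^{N+1}` admits a sum-free subset of size
`l + 1`. -/
theorem arrow_succ_sumfree (N l : ℕ) (hN : 1 ≤ N) (hl : 1 ≤ l)
    (H : ∀ A : Set (Fin N → ℤ), A ⊆ {v | ∀ i, v i ∈ ({0, 1, -1} : Set ℤ)} →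
      (∀ k : Fin N, Pi.single k (1 : ℤ) ∈ A) → (∀ v ∈ A, -v ∈ A) →
      ∃ B : Finset (Fin N → ℤ), ↑B ⊆ A ∧ B.card = l ∧
        ∀ u ∈ B, ∀ v ∈ B, u ≠ v → u + v ∉ A) :
    ∀ A' : Set (Fin (N + 1) → ℤ), A' ⊆ {v | ∀ i, v i ∈ ({0, 1, -1} : Set ℤ)} →
      (∀ k : Fin (N + 1), Pi.single k (1 : ℤ) ∈ A') → (∀ v ∈ A', -v ∈ A') →
      ∃ B : Finset (Fin (N + 1) → ℤ), ↑B ⊆ A' ∧ B.card = l + 1 ∧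
        ∀ u ∈ B, ∀ v ∈ B, u ≠ v → u + v ∉ A' := by
  intro A' hcube hbasis hsymm
  classical
  -- the projection of A'
  set A : Set (Fin N → ℤ) := {v | ∃ c : ℤ, Fin.snoc v c ∈ A'} with hA
  have hAcube : A ⊆ {v | ∀ i, v i ∈ ({0, 1, -1} : Set ℤ)} := by
    rintro v ⟨c, hc⟩ i
    have := hcube hc (Fin.castSucc i)
    simpa using this
  have hAbasis : ∀ k : Fin N, Pi.single k (1 : ℤ) ∈ A := fun k =>
    ⟨0, by rw [snoc_single']; exact hbasis _⟩
  have hAsymm : ∀ v ∈ A, -v ∈ A := by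
    rintro v ⟨c, hc⟩
    exact ⟨-c, by rw [← snoc_neg']; exact hsymm _ hc⟩
  obtain ⟨B, hBA, hBcard, hBsf⟩ := H A hAcube hAbasis hAsymm
  by_cases h0 : (0 : Fin N → ℤ) ∈ B
  · -- then B = {0} and l = 1; build an explicit 2-element sum-free set
    have hB0 : B = {0} := by
      apply Finset.eq_singleton_iff_unique_mem.mpr
      refine ⟨h0, fun c hc => ?_⟩
      by_contra hne
      exact hBsf 0 h0 c hc (Ne.symm hne) (by simpa using hBA hc)
    have hl1 : l = 1 := by rw [← hBcard, hB0]; simp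
    have hN0 : (0 : ℕ) < N + 1 := by omega
    set w1 : Fin (N+1) → ℤ := Pi.single ⟨0, hN0⟩ 1 with hw1
    set w2 : Fin (N+1) → ℤ := Pi.single (Fin.last N) 1 with hw2
    have hw1A : w1 ∈ A' := hbasis _
    have hw2A : w2 ∈ A' := hbasis _
    have hne' : (⟨0, hN0⟩ : Fin (N+1)) ≠ Fin.last N := by
      simp only [Fin.ne_iff_vne, Fin.val_last]; omega
    have hw1last : w1 (Fin.last N) = 0 := by
      rw [hw1]; exact Pi.single_eq_of_ne hne'.symm 1
    have hw2last : w2 (Fin.last N) = 1 := by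
      rw [hw2]; exact Pi.single_eq_same _ _
    have hw1zero : w1 ⟨0, hN0⟩ = 1 := by
      rw [hw1]; exact Pi.single_eq_same _ _
    have hw2zero : w2 ⟨0, hN0⟩ = 0 := by
      rw [hw2]; exact Pi.single_eq_of_ne hne' 1
    have hw12 : w1 ≠ w2 := by
      intro h
      have := congrFun h (Fin.last N)
      rw [hw1last, hw2last] at this
      exact absurd this (by norm_num)
    by_cases h12 : w1 + w2 ∈ A'
    · -- use {w1, w1 + w2}
      have hne2 : w1 ≠ w1 + w2 := by
        intro h
        have := congrFun h (Fin.last N)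
        simp only [Pi.add_apply, hw1last, hw2last] at this
        norm_num at this
      have hsum : w1 + (w1 + w2) ∉ A' := by
        intro hmem
        have := hcube hmem ⟨0, hN0⟩
        simp only [Pi.add_apply, hw1zero, hw2zero, Set.mem_insert_iff,
          Set.mem_singleton_iff] at this
        omega
      refine ⟨{w1, w1 + w2}, ?_, ?_, ?_⟩
      · intro x hx
        simp only [Finset.coe_insert, Finset.coe_singleton, Set.mem_insert_iff,
          Set.mem_singleton_iff] at hx
        rcases hx with rfl | rfl
        · exact hw1A
        · exact h12
      · rw [hl1, Finset.card_pair hne2]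
      · intro u hu v hv huv
        simp only [Finset.mem_insert, Finset.mem_singleton] at hu hv
        rcases hu with rfl | rfl <;> rcases hv with rfl | rfl
        · exact absurd rfl huv
        · exact hsum
        · rw [show w1 + w2 + w1 = w1 + (w1 + w2) by ring]; exact hsum
        · exact absurd rfl huv
    · -- use {w1, w2}
      refine ⟨{w1, w2}, ?_, ?_, ?_⟩
      · intro x hx
        simp only [Finset.coe_insert, Finset.coe_singleton, Set.mem_insert_iff,
          Set.mem_singleton_iff] at hx
        rcases hx with rfl | rfl
        · exact hw1A
        · exact hw2A
      · rw [hl1, Finset.card_pair hw12]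
      · intro u hu v hv huv
        simp only [Finset.mem_insert, Finset.mem_singleton] at hu hv
        rcases hu with rfl | rfl <;> rcases hv with rfl | rfl
        · exact absurd rfl huv
        · exact h12
        · rw [show w2 + w1 = w1 + w2 by ring]; exact h12
        · exact absurd rfl huv
  · -- main case: 0 ∉ B. Lift greedily.
    set f : (Fin N → ℤ) → (Fin (N+1) → ℤ) := fun b =>
      if Fin.snoc b 1 ∈ A' then Fin.snoc b 1
      else if Fin.snoc b 0 ∈ A' then Fin.snoc b 0
      else Fin.snoc b (-1) with hf
    set e : Fin (N+1) → ℤ := Pi.single (Fin.last N) 1 with he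
    -- f b is a snoc with controlled last coordinate
    have hfcases : ∀ b : Fin N → ℤ, ∃ c : ℤ,
        f b = Fin.snoc b c ∧ Fin.snoc b (c + 1) ∉ A' ∨
        f b = Fin.snoc b 1 := by
      intro b
      rw [hf]
      by_cases h1 : Fin.snoc b (1:ℤ) ∈ A'
      · exact ⟨1, Or.inr (by simp [h1])⟩
      · by_cases h2 : Fin.snoc b (0:ℤ) ∈ A'
        · exact ⟨0, Or.inl ⟨by simp [h1, h2], by norm_num; exact h1⟩⟩
        · exact ⟨-1, Or.inl ⟨by simp [h1, h2], by norm_num; exact h2⟩⟩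
      
    have hfsnoc : ∀ b : Fin N → ℤ, ∃ c : ℤ, f b = Fin.snoc b c := by
      intro b
      obtain ⟨c, hc | hc⟩ := hfcases b
      · exact ⟨c, hc.1⟩
      · exact ⟨1, hc⟩
    have hfmem : ∀ b ∈ A, f b ∈ A' := by
      rintro b ⟨c, hc⟩
      simp only [hf]
      split_ifs with h1 h2
      · exact h1
      · exact h2
      · -- c must be -1
        have hcc := hcube hc (Fin.last N)
        rw [Fin.snoc_last] at hcc
        simp only [Set.mem_insert_iff, Set.mem_singleton_iff] at hcc
        rcases hcc with rfl | rfl | rfl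
        · exact absurd hc h2
        · exact absurd hc h1
        · exact hc
    have hproj : ∀ (b : Fin N → ℤ) (c : ℤ) (i : Fin N),
        (Fin.snoc b c : Fin (N+1) → ℤ) (Fin.castSucc i) = b i := fun b c i => by
      simp
    have hfinj : ∀ b b' : Fin N → ℤ, f b = f b' → b = b' := by
      intro b b' hbb
      obtain ⟨c, hc⟩ := hfsnoc b
      obtain ⟨c', hc'⟩ := hfsnoc b'
      funext i
      have := congrFun (hc ▸ hc' ▸ hbb) (Fin.castSucc i)
      rwa [hproj, hproj] at this
    have hfne : ∀ b : Fin N → ℤ, b ≠ 0 → f b ≠ e := by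
      intro b hb hfb
      apply hb
      obtain ⟨c, hc⟩ := hfsnoc b
      funext i
      have := congrFun hfb (Fin.castSucc i)
      rw [hc, hproj, he, single_last', hproj] at this
      simpa using this
    -- e + f b is never in A'
    have hesum : ∀ b : Fin N → ℤ, e + f b ∉ A' := by
      intro b hmem
      obtain ⟨c, ⟨hc, hcnot⟩ | hc⟩ := hfcases b
      · rw [he, single_last', hc, snoc_add', zero_add, add_comm (1:ℤ) c] at hmem
        exact hcnot hmem
      · rw [he, single_last', hc, snoc_add', zero_add] at hmem
        have := hcube hmem (Fin.last N)
        rw [Fin.snoc_last] at this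
        simp only [Set.mem_insert_iff, Set.mem_singleton_iff] at this
        omega
    -- sums of two distinct lifts are never in A'
    have hffsum : ∀ b ∈ B, ∀ b' ∈ B, b ≠ b' → f b + f b' ∉ A' := by
      intro b hb b' hb' hne hmem
      obtain ⟨c, hc⟩ := hfsnoc b
      obtain ⟨c', hc'⟩ := hfsnoc b'
      rw [hc, hc', snoc_add'] at hmem
      exact hBsf b hb b' hb' hne ⟨c + c', hmem⟩
    refine ⟨insert e (B.image f), ?_, ?_, ?_⟩
    · intro x hx
      simp only [Finset.coe_insert, Set.mem_insert_iff, Finset.coe_image,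
        Set.mem_image, Finset.mem_coe] at hx
      rcases hx with rfl | ⟨b, hb, rfl⟩
      · exact hbasis _
      · exact hfmem b (hBA hb)
    · rw [Finset.card_insert_of_notMem, Finset.card_image_of_injOn, hBcard]
      · exact fun x _ y _ h => hfinj x y h
      · intro hmem
        obtain ⟨b, hb, hfb⟩ := Finset.mem_image.mp hmem
        exact hfne b (fun h => h0 (h ▸ hb)) hfb
    · intro u hu v hv huv
      simp only [Finset.mem_insert, Finset.mem_image] at hu hv
      rcases hu with rfl | ⟨b, hb, rfl⟩ <;> rcases hv with rfl | ⟨b', hb', rfl⟩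
      · exact absurd rfl huv
      · exact hesum b'
      · rw [show f b + e = e + f b from add_comm _ _]; exact hesum b
      · refine hffsum b hb b' hb' (fun h => huv ?_)
        rw [h]
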